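/- arXiv:1411.0222 — 3 statements merged into one kernel-verified Lean document; each statement's English description precedes it below -/
import Mathlib

section
/- Equip the set of pairs of series (ℝ⟨⟨X⟩⟩)² with the ultrametric dist(c_δ, d_δ) = max(dist(c_L,d_L), dist(c_R,d_R)). For any series c, writing c = (c,∅)∅ + c' with c' proper, the map d_δ ↦ c ∘̃ d_δ satisfies dist(c ∘̃ d_{δ,1}, c ∘̃ d_{δ,2}) ≤ σ^{ord(c')} · dist(d_{δ,1}, d_{δ,2}); in particular it is an ultrametric contraction. -/
/-- Formal power series over the alphabet `X = {x₀, x₁}` (encoded as `Bool`,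
with `x₀ = false` and `x₁ = true`). -/
abbrev FPS := List Bool → ℝ

/-- The letter `x₀`. -/
def x₀ : Bool := false

/-- The letter `x₁`. -/
def x₁ : Bool := true

/-- Shuffle product of formal power series, via the left-quotient recursion. -/
noncomputable def shuffle : (List Bool → ℝ) → (List Bool → ℝ) → List Bool → ℝ
  | c, d, [] => c [] * d []
  | c, d, x :: w => shuffle (fun u => c (x :: u)) d w + shuffle c (fun u => d (x :: u)) w

/-- The series `1` (the empty word). -/
noncomputable def oneF : FPS := fun w => match w with | [] => 1 | _ => 0

/-- The series corresponding to a single word. -/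
noncomputable def ind (η : List Bool) : FPS := fun w => if w = η then 1 else 0

/-- Left catenation of the series `e` by a letter `x`: the series `x e`. -/
noncomputable def pre (x : Bool) (e : FPS) : FPS :=
  fun w => match w with
  | [] => 0
  | y :: u => if y = x then e u else 0

/-- The word-indexed family of endomorphisms `φ_d`, determined by
`φ_d(x₀)(e) = x₀ e` and `φ_d(x₁)(e) = x₁(d_L ⧢ e) + x₀(d_R ⧢ e)`. -/
noncomputable def phiW (d : FPS × FPS) : List Bool → FPS → FPS
  | [], e => e
  | x :: η, e =>
      if x then pre x₁ (shuffle d.1 (phiW d η e)) + pre x₀ (shuffle d.2 (phiW d η e))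
      else pre x₀ (phiW d η e)

/-- The mixed composition product `c ∘̃ d_δ = Σ_η (c,η) φ_d(η)(1)`.
(For each word `w` only the finitely many `η` with `|η| ≤ |w|` contribute.) -/
noncomputable def mixedComp (c : FPS) (d : FPS × FPS) : FPS :=
  fun w => ∑' η : List Bool, c η * phiW d η oneF w

/-- Order of a series: minimal word length in the support, `⊤` for the zero series. -/
noncomputable def ord (c : List Bool → ℝ) : ℕ∞ :=
  sInf {n : ℕ∞ | ∃ w, c w ≠ 0 ∧ (w.length : ℕ∞) = n}

/-- `σ` raised to an extended-natural power, with `σ^⊤ = 0`. -/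
noncomputable def upow (σ : ℝ) (n : ℕ∞) : ℝ :=
  if n = ⊤ then 0 else σ ^ n.toNat

/-- The ultrametric distance `dist(c,d) = σ^(ord (c-d))`. -/
noncomputable def udist (σ : ℝ) (c d : List Bool → ℝ) : ℝ :=
  upow σ (ord (c - d))

/-- The proper part `c'` of a series `c = (c,∅)∅ + c'`. -/
noncomputable def properPart (c : FPS) : FPS :=
  fun w => match w with | [] => 0 | _ => c w

/-- The `max` ultrametric on pairs of series. -/
noncomputable def udistPair (σ : ℝ) (c d : FPS × FPS) : ℝ :=
  max (udist σ c.1 d.1) (udist σ c.2 d.2)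

/-! Each operation building `φ_d(η)` raises the order: prefixing a letter by one, and the
shuffle product is additive in orders, `ord (a ⧢ b) ≥ ord a + ord b`. By bilinearity of `⧢`,
`a ⧢ e - b ⧢ f = (a - b) ⧢ e + b ⧢ (e - f)`, so induction on `η` gives
`ord (φ_{d₁}(η) e - φ_{d₂}(η) e) ≥ |η| + ord (d₁ - d₂)`. In `c ∘̃ d` the empty word contributes
the same term for both `d`'s, and every other contributing `η` has `|η| ≥ ord c'`; hence
`ord (c ∘̃ d₁ - c ∘̃ d₂) ≥ ord c' + ord (d₁ - d₂)`, and `n ↦ σ ^ n` is antitone and turns sums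
into products. Finally `ord c' ≥ 1` bounds the factor by `σ`. -/

lemma le_ord {f : FPS} {n : ℕ∞} (h : ∀ w : List Bool, (w.length : ℕ∞) < n → f w = 0) :
    n ≤ ord f := by
  refine le_sInf ?_
  rintro k ⟨w, hw, rfl⟩
  by_contra hlt
  exact hw (h w (lt_of_not_ge hlt))

lemma ord_le_length {f : FPS} {w : List Bool} (h : f w ≠ 0) : ord f ≤ w.length :=
  sInf_le ⟨w, h, rfl⟩

lemma apply_eq_zero_of_length_lt_ord {f : FPS} {w : List Bool} (h : (w.length : ℕ∞) < ord f) :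
    f w = 0 := by
  by_contra hf
  exact (ord_le_length hf).not_gt h

lemma ord_zero : ord 0 = ⊤ :=
  top_le_iff.mp (le_ord fun _ _ => rfl)

lemma min_ord_le_ord_add (f g : FPS) : min (ord f) (ord g) ≤ ord (f + g) :=
  le_ord fun w hw => by
    rw [Pi.add_apply, apply_eq_zero_of_length_lt_ord (hw.trans_le (min_le_left _ _)),
      apply_eq_zero_of_length_lt_ord (hw.trans_le (min_le_right _ _)), add_zero]

lemma add_one_le_ord_pre (x : Bool) {e : FPS} {n : ℕ∞} (h : n ≤ ord e) :
    n + 1 ≤ ord (pre x e) :=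
  le_ord fun w hw => by
    cases w with
    | nil => rfl
    | cons y u =>
      have hu : (u.length : ℕ∞) < ord e :=
        ((ENat.add_lt_add_iff_right ENat.one_ne_top).mp (by simpa using hw)).trans_le h
      simp [pre, apply_eq_zero_of_length_lt_ord hu]

lemma ord_le_ord_tail_add_one (f : FPS) (x : Bool) : ord f ≤ ord (fun u => f (x :: u)) + 1 := by
  refine le_trans le_tsub_add (add_le_add_left (le_ord fun u hu => ?_) 1)
  exact apply_eq_zero_of_length_lt_ord (by simpa using lt_tsub_iff_right.mp hu)

lemma pre_sub (x : Bool) (e f : FPS) : pre x (e - f) = pre x e - pre x f := by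
  funext w
  cases w with
  | nil => simp [pre]
  | cons y u => by_cases h : y = x <;> simp [pre, h]

lemma shuffle_sub_left (a b e : FPS) : shuffle (a - b) e = shuffle a e - shuffle b e := by
  funext w
  induction w generalizing a b e with
  | nil => simp only [shuffle, Pi.sub_apply]; ring
  | cons x w ih =>
    simp only [shuffle, Pi.sub_apply]
    rw [show (fun u => a (x :: u) - b (x :: u)) = (fun u => a (x :: u)) - fun u => b (x :: u)
      from rfl, ih, ih]
    simp only [Pi.sub_apply]
    ring

lemma shuffle_sub_right (a e f : FPS) : shuffle a (e - f) = shuffle a e - shuffle a f := by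
  funext w
  induction w generalizing a e f with
  | nil => simp only [shuffle, Pi.sub_apply]; ring
  | cons x w ih =>
    simp only [shuffle, Pi.sub_apply]
    rw [show (fun u => e (x :: u) - f (x :: u)) = (fun u => e (x :: u)) - fun u => f (x :: u)
      from rfl, ih, ih]
    simp only [Pi.sub_apply]
    ring

lemma shuffle_sub_shuffle (a b e f : FPS) :
    shuffle a e - shuffle b f = shuffle (a - b) e + shuffle b (e - f) := by
  rw [shuffle_sub_left, shuffle_sub_right]
  abel

lemma ord_add_ord_le_ord_shuffle (a b : FPS) : ord a + ord b ≤ ord (shuffle a b) := by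
  refine le_ord fun w hw => ?_
  induction w generalizing a b with
  | nil =>
    rcases eq_or_ne (ord a) 0 with ha | ha
    · simp only [shuffle]
      rw [apply_eq_zero_of_length_lt_ord (f := b) (by simpa [ha] using hw), mul_zero]
    · simp only [shuffle]
      rw [apply_eq_zero_of_length_lt_ord (f := a) (by simpa [pos_iff_ne_zero] using ha), zero_mul]
  | cons x w ih =>
    have hw' : (w.length : ℕ∞) + 1 < ord a + ord b := by simpa using hw
    simp only [shuffle]
    rw [ih _ _ ?_, ih _ _ ?_, add_zero]
    · refine (ENat.add_lt_add_iff_right ENat.one_ne_top).mp (hw'.trans_le ?_)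
      calc ord a + ord b ≤ ord a + (ord (fun u => b (x :: u)) + 1) :=
            by gcongr; exact ord_le_ord_tail_add_one b x
        _ = _ := (add_assoc _ _ _).symm
    · refine (ENat.add_lt_add_iff_right ENat.one_ne_top).mp (hw'.trans_le ?_)
      calc ord a + ord b ≤ ord (fun u => a (x :: u)) + 1 + ord b :=
            by gcongr; exact ord_le_ord_tail_add_one a x
        _ = _ := add_right_comm _ _ _

lemma length_add_ord_le_ord_phiW (d : FPS × FPS) (e : FPS) (η : List Bool) :
    η.length + ord e ≤ ord (phiW d η e) := by
  induction η with
  | nil => simp [phiW]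
  | cons x η ih =>
    have hpre : ∀ y f, η.length + ord e ≤ ord f →
        ((x :: η).length + ord e : ℕ∞) ≤ ord (pre y f) := fun y f hf => by
      rw [List.length_cons, Nat.cast_succ, add_right_comm]
      exact add_one_le_ord_pre y hf
    have hshuffle : ∀ a, η.length + ord e ≤ ord (shuffle a (phiW d η e)) :=
      fun a => (ih.trans le_add_self).trans (ord_add_ord_le_ord_shuffle a _)
    cases x
    · exact hpre x₀ _ ih
    · exact (le_min (hpre _ _ (hshuffle _)) (hpre _ _ (hshuffle _))).trans
        (min_ord_le_ord_add _ _)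

lemma length_add_min_ord_sub_le_ord_phiW_sub (d₁ d₂ : FPS × FPS) (e : FPS) (η : List Bool) :
    η.length + min (ord (d₁.1 - d₂.1)) (ord (d₁.2 - d₂.2)) ≤
      ord (phiW d₁ η e - phiW d₂ η e) := by
  set B := min (ord (d₁.1 - d₂.1)) (ord (d₁.2 - d₂.2))
  induction η with
  | nil => simp [phiW, ord_zero]
  | cons x η ih =>
    have hpre : ∀ y f, η.length + B ≤ ord f → ((x :: η).length + B : ℕ∞) ≤ ord (pre y f) :=
      fun y f hf => by
        rw [List.length_cons, Nat.cast_succ, add_right_comm]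
        exact add_one_le_ord_pre y hf
    have hshuffle : ∀ a b, B ≤ ord (a - b) →
        η.length + B ≤ ord (shuffle a (phiW d₁ η e) - shuffle b (phiW d₂ η e)) := by
      intro a b hab
      rw [shuffle_sub_shuffle]
      refine le_trans (le_min ?_ ?_) (min_ord_le_ord_add _ _)
      · calc (η.length : ℕ∞) + B ≤ ord (a - b) + ord (phiW d₁ η e) := by
              rw [add_comm]; gcongr; exact le_self_add.trans (length_add_ord_le_ord_phiW d₁ e η)
          _ ≤ _ := ord_add_ord_le_ord_shuffle _ _
      · exact (ih.trans le_add_self).trans (ord_add_ord_le_ord_shuffle _ _)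
    cases x
    · simp only [phiW, Bool.false_eq_true, if_false]
      rw [← pre_sub]
      exact hpre x₀ _ ih
    · simp only [phiW, if_true]
      rw [add_sub_add_comm, ← pre_sub, ← pre_sub]
      exact (le_min (hpre _ _ (hshuffle _ _ (min_le_left _ _)))
        (hpre _ _ (hshuffle _ _ (min_le_right _ _)))).trans (min_ord_le_ord_add _ _)

lemma ord_properPart_add_le_ord_mixedComp_sub (c : FPS) (d₁ d₂ : FPS × FPS) :
    ord (properPart c) + min (ord (d₁.1 - d₂.1)) (ord (d₁.2 - d₂.2)) ≤
      ord (mixedComp c d₁ - mixedComp c d₂) := by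
  refine le_ord fun w hw => ?_
  rw [Pi.sub_apply, sub_eq_zero]
  refine tsum_congr fun η => ?_
  rcases eq_or_ne (properPart c η) 0 with hc | hc
  · cases η with
    | nil => rfl
    | cons x η => simp only [properPart] at hc; rw [hc, zero_mul, zero_mul]
  · congr 1
    rw [← sub_eq_zero]
    refine apply_eq_zero_of_length_lt_ord (f := phiW d₁ η oneF - phiW d₂ η oneF) (hw.trans_le ?_)
    calc ord (properPart c) + min (ord (d₁.1 - d₂.1)) (ord (d₁.2 - d₂.2))
        ≤ η.length + min (ord (d₁.1 - d₂.1)) (ord (d₁.2 - d₂.2)) := by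
          gcongr; exact ord_le_length hc
      _ ≤ _ := length_add_min_ord_sub_le_ord_phiW_sub d₁ d₂ oneF η

lemma one_le_ord_properPart (c : FPS) : 1 ≤ ord (properPart c) :=
  le_ord fun w hw => by
    cases w with
    | nil => rfl
    | cons x u => simp at hw

lemma upow_nonneg {σ : ℝ} (hσ : 0 ≤ σ) (n : ℕ∞) : 0 ≤ upow σ n := by
  unfold upow
  split
  · exact le_rfl
  · exact pow_nonneg hσ _

lemma upow_one (σ : ℝ) : upow σ 1 = σ := by
  simp [upow]

lemma upow_add (σ : ℝ) (a b : ℕ∞) : upow σ (a + b) = upow σ a * upow σ b := by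
  induction a using ENat.recTopCoe with
  | top => simp [upow]
  | coe a =>
    induction b using ENat.recTopCoe with
    | top => simp [upow]
    | coe b =>
      simp only [upow, ← Nat.cast_add, ENat.natCast_ne_top, if_false, ENat.toNat_natCast, pow_add]

lemma upow_antitone {σ : ℝ} (h0 : 0 ≤ σ) (h1 : σ ≤ 1) : Antitone (upow σ) := by
  intro a b hab
  induction b using ENat.recTopCoe with
  | top => simpa [upow] using upow_nonneg h0 a
  | coe b =>
    lift a to ℕ using ne_top_of_le_ne_top (ENat.natCast_ne_top b) hab
    simpa [upow] using pow_le_pow_of_le_one h0 h1 (by exact_mod_cast hab)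

/-- The mixed composition product is an ultrametric contraction in its right argument:
`dist(c ∘̃ d₁, c ∘̃ d₂) ≤ σ^{ord c'} · dist(d₁, d₂)`, where `c'` is the proper part of `c`. -/
theorem mixedComp_contraction (σ : ℝ) (hσ0 : 0 < σ) (hσ1 : σ < 1)
    (c : FPS) (d₁ d₂ : FPS × FPS) :
    udist σ (mixedComp c d₁) (mixedComp c d₂) ≤
      upow σ (ord (properPart c)) * udistPair σ d₁ d₂ ∧
    udist σ (mixedComp c d₁) (mixedComp c d₂) ≤ σ * udistPair σ d₁ d₂ := by
  have hanti := upow_antitone hσ0.le hσ1.le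
  have hcontr : udist σ (mixedComp c d₁) (mixedComp c d₂) ≤
      upow σ (ord (properPart c)) * udistPair σ d₁ d₂ := by
    simp only [udistPair, udist]
    rw [← hanti.map_min, ← upow_add]
    exact hanti (ord_properPart_add_le_ord_mixedComp_sub c d₁ d₂)
  refine ⟨hcontr, hcontr.trans (mul_le_mul_of_nonneg_right ?_ ?_)⟩
  · simpa only [upow_one] using hanti (one_le_ord_properPart c)
  · exact (upow_nonneg hσ0.le _).trans (le_max_left _ _)
end

section
/- Define on pairs of series the composition product c_δ ∘ d_δ = ((c_L ∘̃ d_δ) ⧢ d_L, (c_L ∘̃ d_δ) ⧢ d_R + c_R ∘̃ d_δ). Then mixed associativity holds: (c ∘̃ d_δ) ∘̃ e_δ = c ∘̃ (d_δ ∘ e_δ) for all series c and pairs d_δ, e_δ. -/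
/-- The composition product on pairs:
`c_δ ∘ d_δ = ((c_L ∘̃ d_δ) ⧢ d_L, (c_L ∘̃ d_δ) ⧢ d_R + c_R ∘̃ d_δ)`. -/
noncomputable def compD (c d : FPS × FPS) : FPS × FPS :=
  (shuffle (mixedComp c.1 d) d.1,
    shuffle (mixedComp c.1 d) d.2 + mixedComp c.2 d)

/-!
A series is determined by its constant term and its left shifts `x⁻¹`, and the coefficient of a
shuffle `a ⧢ b` at `w` only involves coefficients of `a` and `b` at words no longer than `w`.
So, by induction on word length, an identity between series holds once both sides have the same
constant term and their left shifts are built by sums and shuffles from instances of the identity.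
The left shifts of `c ∘̃ d` are `x₁⁻¹(c ∘̃ d) = d_L ⧢ (x₁⁻¹c ∘̃ d)` and
`x₀⁻¹(c ∘̃ d) = x₀⁻¹c ∘̃ d + d_R ⧢ (x₁⁻¹c ∘̃ d)`. As `x⁻¹` is a derivation of the commutative,
associative shuffle product, this shows first that `· ∘̃ e` is a shuffle morphism, and then that
both sides of mixed associativity obey the same recursion.
-/

open Set

infixl:70 " ⧢ " => shuffle

/-- The left shift `x⁻¹(c)`. -/
def leftShift (x : Bool) (c : FPS) : FPS := fun u => c (x :: u)

theorem leftShift_apply (x : Bool) (c : FPS) (u : List Bool) : leftShift x c u = c (x :: u) := rfl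

theorem leftShift_oneF (x : Bool) : leftShift x oneF = 0 := rfl

theorem leftShift_pre_self (x : Bool) (c : FPS) : leftShift x (pre x c) = c := by
  funext u; simp [leftShift, pre]

theorem leftShift_pre_of_ne {x y : Bool} (h : x ≠ y) (c : FPS) : leftShift x (pre y c) = 0 := by
  funext u; simp [leftShift, pre, h]

abbrev EqUpTo (n : ℕ) (c d : FPS) : Prop := EqOn c d {u | u.length ≤ n}

theorem eq_of_eqUpTo_leftShift {ι : Type*} {f g : ι → FPS} (hnil : ∀ i, f i [] = g i [])
    (hcons : ∀ n, (∀ i, EqUpTo n (f i) (g i)) →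
      ∀ i x, EqUpTo n (leftShift x (f i)) (leftShift x (g i))) :
    f = g := by
  suffices h : ∀ n i, EqUpTo n (f i) (g i) from
    funext fun i => funext fun w => h w.length i (le_refl w.length)
  intro n
  induction n with
  | zero =>
    intro i u hu
    rw [List.length_eq_zero_iff.1 (Nat.le_zero.1 hu)]
    exact hnil i
  | succ n ih =>
    intro i u hu
    rcases u with _ | ⟨x, v⟩
    · exact hnil i
    · exact hcons n ih i x (Nat.succ_le_succ_iff.mp hu)

section Shuffle

variable (a b c : FPS)

theorem shuffle_nil : (a ⧢ b) [] = a [] * b [] := rfl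

theorem shuffle_cons (x : Bool) (w : List Bool) :
    (a ⧢ b) (x :: w) = (leftShift x a ⧢ b) w + (a ⧢ leftShift x b) w :=
  rfl

theorem leftShift_shuffle (x : Bool) :
    leftShift x (a ⧢ b) = leftShift x a ⧢ b + a ⧢ leftShift x b :=
  rfl

theorem leftShift_add (x : Bool) : leftShift x (a + b) = leftShift x a + leftShift x b := rfl

theorem leftShift_smul (x : Bool) (r : ℝ) : leftShift x (r • a) = r • leftShift x a := rfl

theorem shuffle_comm : a ⧢ b = b ⧢ a := by
  funext w
  induction w generalizing a b with
  | nil => exact mul_comm _ _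
  | cons x w ih => rw [shuffle_cons, shuffle_cons, ih, ih a, add_comm]

theorem shuffle_add : a ⧢ (b + c) = a ⧢ b + a ⧢ c := by
  funext w
  induction w generalizing a b c with
  | nil => exact mul_add _ _ _
  | cons x w ih => simp only [shuffle_cons, Pi.add_apply, leftShift_add, ih]; ring

theorem add_shuffle : (a + b) ⧢ c = a ⧢ c + b ⧢ c := by
  rw [shuffle_comm, shuffle_add, shuffle_comm c, shuffle_comm c]

theorem shuffle_assoc : a ⧢ b ⧢ c = a ⧢ (b ⧢ c) := by
  funext w
  induction w generalizing a b c with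
  | nil => exact mul_assoc _ _ _
  | cons x w ih =>
    simp only [shuffle_cons, leftShift_shuffle, add_shuffle, shuffle_add, Pi.add_apply, ih]
    ring

theorem shuffle_smul (r : ℝ) : a ⧢ (r • b) = r • (a ⧢ b) := by
  funext w
  induction w generalizing a b with
  | nil => exact mul_left_comm _ _ _
  | cons x w ih =>
    simp only [shuffle_cons, leftShift_smul, Pi.smul_apply, smul_eq_mul] at ih ⊢
    rw [ih, ih, mul_add]

theorem shuffle_zero : a ⧢ 0 = 0 := by simpa using shuffle_smul a 0 0

instance : Std.Commutative shuffle := ⟨shuffle_comm⟩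

instance : Std.Associative shuffle := ⟨shuffle_assoc⟩

end Shuffle

section EqUpTo

variable {n : ℕ} {a a' b b' : FPS}

theorem EqUpTo.leftShift (h : EqUpTo (n + 1) a a') (x : Bool) :
    EqUpTo n (leftShift x a) (leftShift x a') :=
  fun _ hu => h (by simpa using hu)

theorem EqUpTo.add (ha : EqUpTo n a a') (hb : EqUpTo n b b') : EqUpTo n (a + b) (a' + b') :=
  fun _ hu => congrArg₂ (· + ·) (ha hu) (hb hu)

theorem EqUpTo.shuffle (ha : EqUpTo n a a') (hb : EqUpTo n b b') :
    EqUpTo n (a ⧢ b) (a' ⧢ b') := by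
  intro w hw
  induction w generalizing n a a' b b' with
  | nil => rw [shuffle_nil, shuffle_nil, ha hw, hb hw]
  | cons x w ih =>
    obtain ⟨m, rfl⟩ : ∃ m, n = m + 1 := Nat.exists_eq_add_one.mpr (by simp at hw; omega)
    have hw : w.length ≤ m := by simpa using hw
    have mono : {u : List Bool | u.length ≤ m} ⊆ {u | u.length ≤ m + 1} :=
      fun _ hu => Nat.le_succ_of_le hu
    rw [shuffle_cons, shuffle_cons, ih (ha.leftShift x) (hb.mono mono) hw,
      ih (ha.mono mono) (hb.leftShift x) hw]

theorem EqUpTo.shuffle_left (a : FPS) (hb : EqUpTo n b b') : EqUpTo n (a ⧢ b) (a ⧢ b') :=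
  EqUpTo.shuffle (eqOn_refl a _) hb

end EqUpTo

theorem HasSum.shuffle_left {ι : Type*} {g : ι → FPS} {b : FPS} (a : FPS) (h : HasSum g b) :
    HasSum (fun i => a ⧢ g i) (a ⧢ b) := by
  refine Pi.hasSum.2 fun w => ?_
  induction w generalizing a g b with
  | nil => exact (Pi.hasSum.1 h []).mul_left (a [])
  | cons x w ih =>
    exact (ih (leftShift x a) h).add (ih a (Pi.hasSum.2 fun u => Pi.hasSum.1 h (x :: u)))

theorem HasSum.leftShift {ι : Type*} {g : ι → FPS} {b : FPS} (h : HasSum g b) (x : Bool) :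
    HasSum (fun i => leftShift x (g i)) (leftShift x b) :=
  Pi.hasSum.2 fun u => Pi.hasSum.1 h (x :: u)

theorem hasSum_of_hasSum_cons {M : Type*} [AddCommMonoid M] [TopologicalSpace M] [ContinuousAdd M]
    {f : List Bool → M} {a b : M} (hnil : f [] = 0) (htrue : HasSum (fun t => f (true :: t)) a)
    (hfalse : HasSum (fun t => f (false :: t)) b) : HasSum f (a + b) := by
  have hsplit : f = (range (true :: ·)).indicator f + (range (false :: ·)).indicator f := by
    funext η
    rcases η with _ | ⟨_ | _, t⟩ <;> simp [hnil]
  rw [hsplit]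
  exact (hasSum_subtype_iff_indicator.1 ((List.cons_injective).hasSum_range_iff.2 htrue)).add
    (hasSum_subtype_iff_indicator.1 ((List.cons_injective).hasSum_range_iff.2 hfalse))

section phiW

variable (e : FPS × FPS) (η : List Bool) (f : FPS)

theorem phiW_cons_true :
    phiW e (true :: η) f = pre x₁ (e.1 ⧢ phiW e η f) + pre x₀ (e.2 ⧢ phiW e η f) :=
  rfl

theorem phiW_cons_false : phiW e (false :: η) f = pre x₀ (phiW e η f) := rfl

theorem phiW_eqUpTo_zero {n : ℕ} (hn : n < η.length) : EqUpTo n (phiW e η f) 0 := by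
  induction η generalizing n with
  | nil => simp at hn
  | cons y t ih =>
    intro u hu
    rcases u with _ | ⟨x, v⟩
    · cases y <;> simp [phiW, pre]
    obtain ⟨m, rfl⟩ : ∃ m, n = m + 1 := Nat.exists_eq_add_one.mpr (by simp at hu; omega)
    have ht : EqUpTo m (phiW e t f) 0 := ih (by simpa using hn)
    have hv : v.length ≤ m := by simpa using hu
    have hshuffle : ∀ a, EqUpTo m (a ⧢ phiW e t f) 0 := fun a => by
      simpa only [shuffle_zero] using ht.shuffle_left a
    change leftShift x (phiW e (y :: t) f) v = 0
    cases y <;> cases x <;>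
      simp [phiW_cons_true, phiW_cons_false, leftShift_add, leftShift_pre_self,
        leftShift_pre_of_ne, x₀, x₁, hshuffle _ hv, ht hv]

end phiW

section mixedComp

variable (c : FPS) (e : FPS × FPS)

theorem hasSum_mixedComp : HasSum (fun η => c η • phiW e η oneF) (mixedComp c e) := by
  refine Pi.hasSum.2 fun w => (summable_of_hasFiniteSupport ?_).hasSum
  refine (List.finite_length_le Bool w.length).subset fun η hη => ?_
  by_contra hlt
  exact hη (by simp [phiW_eqUpTo_zero e η oneF (not_le.1 hlt) (le_refl w.length)])

theorem mixedComp_add (c' : FPS) : mixedComp (c + c') e = mixedComp c e + mixedComp c' e :=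
  (hasSum_mixedComp (c + c') e).unique <| by
    simpa only [Pi.add_apply, add_smul] using (hasSum_mixedComp c e).add (hasSum_mixedComp c' e)

theorem mixedComp_nil : mixedComp c e [] = c [] := by
  refine (Pi.hasSum.1 (hasSum_mixedComp c e) []).unique ?_
  convert hasSum_single [] fun η hη => ?_
  · simp [phiW, oneF]
  · have h : phiW e η oneF [] = 0 :=
      phiW_eqUpTo_zero e η oneF (List.length_pos_of_ne_nil hη) (by simp)
    simp [h]

theorem leftShift_true_mixedComp :
    leftShift true (mixedComp c e) = e.1 ⧢ mixedComp (leftShift true c) e := by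
  refine ((hasSum_mixedComp c e).leftShift true).unique ?_
  rw [← add_zero (e.1 ⧢ _)]
  refine hasSum_of_hasSum_cons ?_ ?_ ?_
  · simp [leftShift_smul, phiW, leftShift_oneF]
  · simpa [leftShift_smul, phiW_cons_true, leftShift_add, leftShift_pre_self, leftShift_pre_of_ne,
      x₀, x₁, shuffle_smul, leftShift_apply]
      using (hasSum_mixedComp (leftShift true c) e).shuffle_left e.1
  · simp [leftShift_smul, phiW_cons_false, leftShift_pre_of_ne, x₀, hasSum_zero]

theorem leftShift_false_mixedComp :
    leftShift false (mixedComp c e) =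
      mixedComp (leftShift false c) e + e.2 ⧢ mixedComp (leftShift true c) e := by
  refine ((hasSum_mixedComp c e).leftShift false).unique ?_
  rw [add_comm]
  refine hasSum_of_hasSum_cons ?_ ?_ ?_
  · simp [leftShift_smul, phiW, leftShift_oneF]
  · simpa [leftShift_smul, phiW_cons_true, leftShift_add, leftShift_pre_self, leftShift_pre_of_ne,
      x₀, x₁, shuffle_smul, leftShift_apply]
      using (hasSum_mixedComp (leftShift true c) e).shuffle_left e.2
  · simpa [leftShift_smul, phiW_cons_false, leftShift_pre_self, x₀, leftShift_apply]
      using hasSum_mixedComp (leftShift false c) e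

end mixedComp

theorem mixedComp_shuffle (a b : FPS) (e : FPS × FPS) :
    mixedComp (a ⧢ b) e = mixedComp a e ⧢ mixedComp b e := by
  suffices h : (fun p : FPS × FPS => mixedComp (p.1 ⧢ p.2) e) =
      fun p => mixedComp p.1 e ⧢ mixedComp p.2 e from congrFun h (a, b)
  refine eq_of_eqUpTo_leftShift (fun p => by simp [mixedComp_nil, shuffle_nil]) ?_
  rintro n ih ⟨a, b⟩ x
  have ih' : ∀ a b, EqUpTo n (mixedComp (a ⧢ b) e) (mixedComp a e ⧢ mixedComp b e) :=
    fun a b => ih (a, b)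
  have ih₁ := (ih' (leftShift true a) b).add (ih' a (leftShift true b))
  cases x
  · have ih₀ := (ih' (leftShift false a) b).add (ih' a (leftShift false b))
    simp only [leftShift_shuffle, leftShift_false_mixedComp, mixedComp_add]
    convert ih₀.add (ih₁.shuffle_left e.2) using 1
    simp only [add_shuffle, shuffle_add]
    ac_rfl
  · simp only [leftShift_shuffle, leftShift_true_mixedComp, mixedComp_add]
    convert ih₁.shuffle_left e.1 using 1
    rw [shuffle_add]
    ac_rfl

theorem compD_fst (d e : FPS × FPS) : (compD d e).1 = mixedComp d.1 e ⧢ e.1 := rfl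

theorem compD_snd (d e : FPS × FPS) : (compD d e).2 = mixedComp d.1 e ⧢ e.2 + mixedComp d.2 e :=
  rfl

/-- Mixed associativity: `(c ∘̃ d_δ) ∘̃ e_δ = c ∘̃ (d_δ ∘ e_δ)`. -/
theorem mixedComp_mixed_assoc (c : FPS) (d e : FPS × FPS) :
    mixedComp (mixedComp c d) e = mixedComp c (compD d e) := by
  suffices h : (fun c => mixedComp (mixedComp c d) e) = fun c => mixedComp c (compD d e) from
    congrFun h c
  refine eq_of_eqUpTo_leftShift (fun c => by simp [mixedComp_nil]) ?_
  intro n ih c x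
  have ih₁ := (ih (leftShift true c)).shuffle_left (mixedComp d.1 e)
  cases x
  · simp only [leftShift_true_mixedComp, leftShift_false_mixedComp, mixedComp_add,
      mixedComp_shuffle, compD_snd]
    convert ((ih (leftShift false c)).add (ih₁.shuffle_left e.2)).add
      ((ih (leftShift true c)).shuffle_left (mixedComp d.2 e)) using 1
    · ac_rfl
    · rw [add_shuffle]
      ac_rfl
  · simp only [leftShift_true_mixedComp, mixedComp_shuffle, compD_fst]
    convert ih₁.shuffle_left e.1 using 1
    ac_rfl
end

section
/- Extend the product • to pairs by treating δ as a letter: (δξ) • v_δ = δ(v_L ⧢ ξ + ξ • v_δ) + v_R ⧢ ξ, where v_δ = δv_L + v_R. Then • is a right pre-Lie product on the space of such pairs: (v¹ • v²) • v³ − v¹ • (v² • v³) = (v¹ • v³) • v² − v¹ • (v³ • v²) for all v¹, v², v³. -/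
/-- The product `ξ • v_δ` on words, for a pair `v_δ = (v_L, v_R)`:
`∅ • v = 0`, `(x₀ξ) • v = x₀(ξ • v)`, `(x₁ξ) • v = x₁(v_L ⧢ ξ + ξ • v) + x₀(v_R ⧢ ξ)`. -/
noncomputable def wordBullet : List Bool → FPS × FPS → FPS
  | [], _ => 0
  | x :: ξ, v =>
      if x then pre x₁ (shuffle v.1 (ind ξ) + wordBullet ξ v) + pre x₀ (shuffle v.2 (ind ξ))
      else pre x₀ (wordBullet ξ v)

/-- Bilinear extension of `•` to series in the left argument. -/
noncomputable def seriesBullet (c : FPS) (v : FPS × FPS) : FPS :=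
  fun w => ∑' ξ : List Bool, c ξ * wordBullet ξ v w

/-- Extension of `•` to pairs `v_δ = δ v_L + v_R`, treating `δ` as a letter:
`(δξ) • v = δ(v_L ⧢ ξ + ξ • v) + v_R ⧢ ξ`, extended bilinearly. -/
noncomputable def pairBullet (u v : FPS × FPS) : FPS × FPS :=
  (shuffle v.1 u.1 + seriesBullet u.1 v, shuffle v.2 u.1 + seriesBullet u.2 v)

/-!
Write `∂ₓ c` for the left quotient of a series `c` by the letter `x`. The recursion defining `•`
says exactly that `c ↦ (∂₁ c, ∂₀ c)` intertwines the product of a series by a pair with the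
product of pairs: `(∂₁ (c • v), ∂₀ (c • v)) = (∂₁ c, ∂₀ c) • v`. Every pair `(v_L, v_R)` arises in
this way, from `x₁ v_L + x₀ v_R` (the letter `δ` is read as `x₁`), so the pre-Lie identity for
pairs is the image of the same identity for a series `c`. That one holds at every word by
induction on its length: by the derivation property of `•` with respect to `⧢`, the left quotient
`∂ₓ` of the associator `(c • v) • w - c • (v • w)` is a term symmetric in `v` and `w` plus the
associator of `∂ₓ c`.
-/

def lquot (x : Bool) (c : FPS) : FPS := fun u => c (x :: u)

lemma lquot_add (x : Bool) (c d : FPS) : lquot x (c + d) = lquot x c + lquot x d := rfl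

lemma lquot_sub (x : Bool) (c d : FPS) : lquot x (c - d) = lquot x c - lquot x d := rfl

lemma lquot_smul (x : Bool) (r : ℝ) (c : FPS) : lquot x (r • c) = r • lquot x c := rfl

lemma lquot_shuffle (x : Bool) (c d : FPS) :
    lquot x (shuffle c d) = shuffle (lquot x c) d + shuffle c (lquot x d) := rfl

lemma shuffle_cons_s16 (c d : FPS) (x : Bool) (u : List Bool) :
    shuffle c d (x :: u) = shuffle (lquot x c) d u + shuffle c (lquot x d) u := rfl

lemma shuffle_nil_s16 (c d : FPS) : shuffle c d [] = c [] * d [] := rfl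

lemma shuffle_comm_s16 (c d : FPS) : shuffle c d = shuffle d c := by
  funext w
  induction w generalizing c d with
  | nil => exact mul_comm _ _
  | cons x u ih => rw [shuffle_cons_s16, shuffle_cons_s16, ih, ih c, add_comm]

lemma shuffle_add_right (c d e : FPS) : shuffle c (d + e) = shuffle c d + shuffle c e := by
  funext w
  induction w generalizing c d e with
  | nil => exact mul_add _ _ _
  | cons x u ih =>
    simp only [shuffle_cons_s16, lquot_add, ih, Pi.add_apply]
    ring

lemma shuffle_add_left (c d e : FPS) : shuffle (c + d) e = shuffle c e + shuffle d e := by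
  rw [shuffle_comm_s16, shuffle_add_right, shuffle_comm_s16 e, shuffle_comm_s16 e]

lemma shuffle_smul_right (r : ℝ) (c d : FPS) : shuffle c (r • d) = r • shuffle c d := by
  funext w
  induction w generalizing c d with
  | nil => exact mul_left_comm _ _ _
  | cons x u ih =>
    simp only [shuffle_cons_s16, Pi.smul_apply, smul_eq_mul] at ih ⊢
    rw [ih, lquot_smul, ih]
    ring

lemma shuffle_assoc_s16 (c d e : FPS) : shuffle (shuffle c d) e = shuffle c (shuffle d e) := by
  funext w
  induction w generalizing c d e with
  | nil => exact mul_assoc _ _ _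
  | cons x u ih =>
    simp only [shuffle_cons_s16, lquot_shuffle, shuffle_add_left, shuffle_add_right, Pi.add_apply, ih]
    ring

lemma shuffle_left_comm (c d e : FPS) : shuffle c (shuffle d e) = shuffle d (shuffle c e) := by
  rw [← shuffle_assoc_s16, shuffle_comm_s16 c d, shuffle_assoc_s16]

lemma shuffle_sum_right {ι : Type*} (c : FPS) (s : Finset ι) (f : ι → FPS) :
    shuffle c (∑ i ∈ s, f i) = ∑ i ∈ s, shuffle c (f i) :=
  map_sum (AddMonoidHom.mk' (shuffle c) (shuffle_add_right c)) f s

lemma shuffle_congr_right (c : FPS) {d e : FPS} {w : List Bool}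
    (h : ∀ η : List Bool, η.length ≤ w.length → d η = e η) : shuffle c d w = shuffle c e w := by
  induction w generalizing c d e with
  | nil => rw [shuffle_nil_s16, shuffle_nil_s16, h [] le_rfl]
  | cons x u ih =>
    rw [shuffle_cons_s16, shuffle_cons_s16,
      ih _ fun η hη => h η (by simp only [List.length_cons]; omega),
      ih c (d := lquot x d) (e := lquot x e) fun η hη => h (x :: η) (by simpa using hη)]

lemma shuffle_ind_eq_zero (c : FPS) {ξ w : List Bool} (h : w.length < ξ.length) :
    shuffle c (ind ξ) w = 0 := by
  have hzero : shuffle c 0 = 0 := by simpa using shuffle_add_right c 0 0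
  rw [shuffle_congr_right c (e := 0), hzero, Pi.zero_apply]
  intro η hη
  simp only [ind, Pi.zero_apply, ite_eq_right_iff, one_ne_zero]
  rintro rfl
  omega

def wordsUpTo : ℕ → Finset (List Bool)
  | 0 => {[]}
  | n + 1 =>
    insert [] ((wordsUpTo n).image (List.cons true) ∪ (wordsUpTo n).image (List.cons false))

lemma mem_wordsUpTo {ξ : List Bool} {n : ℕ} (h : ξ.length ≤ n) : ξ ∈ wordsUpTo n := by
  induction n generalizing ξ with
  | zero => simp_all [wordsUpTo]
  | succ n ih =>
    rcases ξ with _ | ⟨_ | _, ξ⟩ <;> simp_all [wordsUpTo]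

lemma sum_wordsUpTo_succ (f : List Bool → ℝ) (n : ℕ) :
    ∑ ξ ∈ wordsUpTo (n + 1), f ξ =
      f [] + ∑ ξ ∈ wordsUpTo n, f (true :: ξ) + ∑ ξ ∈ wordsUpTo n, f (false :: ξ) := by
  have hdisj : Disjoint ((wordsUpTo n).image (List.cons true))
      ((wordsUpTo n).image (List.cons false)) := by
    simp [Finset.disjoint_left]
  rw [wordsUpTo, Finset.sum_insert (by simp), Finset.sum_union hdisj,
    Finset.sum_image (by simp), Finset.sum_image (by simp), add_assoc]

lemma shuffle_eq_sum_ind (c d : FPS) (u : List Bool) :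
    shuffle c d u = ∑ ξ ∈ wordsUpTo u.length, d ξ * shuffle c (ind ξ) u := by
  have hd : ∀ η : List Bool, η.length ≤ u.length →
      d η = (∑ ξ ∈ wordsUpTo u.length, d ξ • ind ξ) η := by
    intro η hη
    simp [Finset.sum_apply, ind, mem_wordsUpTo hη]
  rw [shuffle_congr_right c hd, shuffle_sum_right, Finset.sum_apply]
  simp only [shuffle_smul_right, Pi.smul_apply, smul_eq_mul]

lemma wordBullet_eq_zero_of_length_lt (v : FPS × FPS) {ξ w : List Bool}
    (h : w.length < ξ.length) : wordBullet ξ v w = 0 := by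
  induction ξ generalizing w with
  | nil => simp at h
  | cons x ξ ih =>
    rcases w with _ | ⟨y, u⟩
    · cases x <;> simp [wordBullet, pre]
    · simp only [List.length_cons, Nat.succ_lt_succ_iff] at h
      cases x <;> cases y <;> simp [wordBullet, pre, x₀, x₁, ih h, shuffle_ind_eq_zero _ h]

lemma seriesBullet_eq_sum (c : FPS) (v : FPS × FPS) (w : List Bool) :
    seriesBullet c v w = ∑ ξ ∈ wordsUpTo w.length, c ξ * wordBullet ξ v w :=
  tsum_eq_sum fun ξ hξ => by
    rw [wordBullet_eq_zero_of_length_lt v (not_le.mp fun h => hξ (mem_wordsUpTo h)), mul_zero]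

lemma seriesBullet_nil (c : FPS) (v : FPS × FPS) : seriesBullet c v [] = 0 := by
  simp [seriesBullet_eq_sum, wordsUpTo, wordBullet]

lemma seriesBullet_add_left (c d : FPS) (v : FPS × FPS) :
    seriesBullet (c + d) v = seriesBullet c v + seriesBullet d v := by
  funext w
  simp only [Pi.add_apply, seriesBullet_eq_sum, add_mul, Finset.sum_add_distrib]

lemma lquot_seriesBullet (x : Bool) (c : FPS) (v : FPS × FPS) :
    lquot x (seriesBullet c v) =
      shuffle (cond x v.1 v.2) (lquot true c) + seriesBullet (lquot x c) v := by
  funext u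
  rw [lquot, seriesBullet_eq_sum, List.length_cons, sum_wordsUpTo_succ, Pi.add_apply,
    shuffle_eq_sum_ind, seriesBullet_eq_sum]
  cases x <;> simp [wordBullet, pre, lquot, x₀, x₁, mul_add, Finset.sum_add_distrib]

lemma seriesBullet_shuffle (c d : FPS) (v : FPS × FPS) :
    seriesBullet (shuffle c d) v =
      shuffle (seriesBullet c v) d + shuffle c (seriesBullet d v) := by
  funext w
  induction w generalizing c d with
  | nil => simp [shuffle_nil_s16, seriesBullet_nil]
  | cons x u ih =>
    change lquot x (seriesBullet (shuffle c d) v) u =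
      lquot x (shuffle (seriesBullet c v) d + shuffle c (seriesBullet d v)) u
    simp only [lquot_seriesBullet, lquot_add, lquot_shuffle, shuffle_add_left, shuffle_add_right,
      seriesBullet_add_left, Pi.add_apply, ih, shuffle_assoc_s16]
    rw [shuffle_left_comm (cond x v.1 v.2) c]
    ring

lemma cond_pairBullet (x : Bool) (u v : FPS × FPS) :
    cond x (pairBullet u v).1 (pairBullet u v).2 =
      shuffle (cond x v.1 v.2) u.1 + seriesBullet (cond x u.1 u.2) v := by
  cases x <;> rfl

lemma lquot_seriesBullet_associator (x : Bool) (c : FPS) (v w : FPS × FPS) :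
    lquot x (seriesBullet (seriesBullet c v) w - seriesBullet c (pairBullet v w)) =
      shuffle (cond x w.1 w.2) (seriesBullet (lquot true c) v) +
        shuffle (cond x v.1 v.2) (seriesBullet (lquot true c) w) +
          (seriesBullet (seriesBullet (lquot x c) v) w -
            seriesBullet (lquot x c) (pairBullet v w)) := by
  simp only [lquot_sub, lquot_seriesBullet, cond_true, cond_pairBullet, seriesBullet_add_left,
    seriesBullet_shuffle, shuffle_add_left, shuffle_add_right, shuffle_assoc_s16]
  abel

theorem seriesBullet_preLie (c : FPS) (v w : FPS × FPS) :
    seriesBullet (seriesBullet c v) w - seriesBullet c (pairBullet v w) =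
      seriesBullet (seriesBullet c w) v - seriesBullet c (pairBullet w v) := by
  funext u
  induction u generalizing c with
  | nil => simp [seriesBullet_nil]
  | cons x u ih =>
    change lquot x (_ - _) u = lquot x (_ - _) u
    rw [lquot_seriesBullet_associator, lquot_seriesBullet_associator, Pi.add_apply, Pi.add_apply,
      Pi.add_apply, Pi.add_apply, ih]
    ring

def lquotPair (c : FPS) : FPS × FPS := (lquot true c, lquot false c)

lemma lquotPair_sub (c d : FPS) : lquotPair (c - d) = lquotPair c - lquotPair d := rfl

lemma lquotPair_seriesBullet (c : FPS) (v : FPS × FPS) :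
    lquotPair (seriesBullet c v) = pairBullet (lquotPair c) v :=
  Prod.ext (lquot_seriesBullet true c v) (lquot_seriesBullet false c v)

lemma lquotPair_surjective : Function.Surjective lquotPair := fun v =>
  ⟨pre x₁ v.1 + pre x₀ v.2, by ext <;> simp [lquotPair, lquot, pre, x₀, x₁]⟩

/-- The product `•` is a right pre-Lie product on pairs `δ v_L + v_R`. -/
theorem pairBullet_preLie (v₁ v₂ v₃ : FPS × FPS) :
    pairBullet (pairBullet v₁ v₂) v₃ - pairBullet v₁ (pairBullet v₂ v₃) =
      pairBullet (pairBullet v₁ v₃) v₂ - pairBullet v₁ (pairBullet v₃ v₂) := by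
  obtain ⟨c, rfl⟩ := lquotPair_surjective v₁
  simpa only [lquotPair_sub, lquotPair_seriesBullet] using
    congrArg lquotPair (seriesBullet_preLie c v₂ v₃)
end
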